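/- Let U : ℝ → ℝ be C² with U(ζ) → ∞ as ζ → ±∞, and let F = U'. Suppose ζ : [0,∞) → ℝ is C¹, bounded, and satisfies (1/(4π))·ζ'(t) + F(ζ(t)) = λ(t) for all t ≥ 0, where λ : [0,∞) → ℝ is continuous with λ(t) → 0 as t → ∞. Assume further that the zero set Q = {q : F(q) = 0} contains no nondegenerate interval [a,b] with a < b. Then there exists q₊ ∈ ℝ with F(q₊) = 0 such that ζ(t) → q₊ as t → ∞. -/

import Mathlib

/-!
For `F c ≠ 0` the level `c` is a one-way barrier for `ζ` at large times: if `ζ t = c` then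
`ζ' t = 4π (λ t - F c)`, which has the sign of `-F c` once `λ t` is small. Such levels are dense
because the zero set of `F` contains no interval, so the bounded function `ζ` has no upcrossings
and converges to some `q`. Then `ζ'` tends to `-4π F q`, which must vanish since `ζ` converges.
-/

open Real Filter Set Topology

theorem dense_compl_of_forall_not_Icc_subset {s : Set ℝ} (h : ∀ a b, a < b → ¬ Icc a b ⊆ s) :
    Dense sᶜ := by
  refine dense_of_exists_between fun a b hab => ?_
  obtain ⟨x, hx, hxs⟩ := not_subset.1 (h ((2 * a + b) / 3) ((a + 2 * b) / 3) (by linarith))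
  exact ⟨x, hxs, by linarith [hx.1], by linarith [hx.2]⟩

theorem eventually_le_of_frequently_le_of_deriv_neg {f : ℝ → ℝ} {c : ℝ}
    (hf : ∀ᶠ t in atTop, DifferentiableAt ℝ f t)
    (hc : ∀ᶠ t in atTop, f t = c → deriv f t < 0)
    (hle : ∃ᶠ t in atTop, f t ≤ c) : ∀ᶠ t in atTop, f t ≤ c := by
  obtain ⟨T, hT⟩ := eventually_atTop.1 (hf.and hc)
  obtain ⟨t₀, hft₀, ht₀⟩ := (hle.and_eventually (eventually_ge_atTop T)).exists
  filter_upwards [eventually_ge_atTop t₀] with t ht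
  have hdiff : ∀ x ∈ Icc t₀ t, DifferentiableAt ℝ f x := fun x hx => (hT x (ht₀.trans hx.1)).1
  exact image_le_of_deriv_right_lt_deriv_boundary' (f' := deriv f) (B := fun _ => c)
    (B' := fun _ => 0) (fun x hx => (hdiff x hx).continuousAt.continuousWithinAt)
    (fun x hx => (hdiff x (Ico_subset_Icc_self hx)).hasDerivAt.hasDerivWithinAt) hft₀
    continuousOn_const (fun _ _ => hasDerivWithinAt_const _ _ _)
    (fun x hx => (hT x (ht₀.trans hx.1)).2) ⟨ht, le_rfl⟩

theorem not_frequently_lt_and_gt_of_deriv_eq_of_tendsto {f g : ℝ → ℝ} {c L : ℝ}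
    (hf : ∀ᶠ t in atTop, DifferentiableAt ℝ f t) (hg : Tendsto g atTop (𝓝 L)) (hL : L ≠ 0)
    (hfg : ∀ᶠ t in atTop, f t = c → deriv f t = g t) :
    ¬((∃ᶠ t in atTop, f t < c) ∧ ∃ᶠ t in atTop, c < f t) := by
  rintro ⟨hbelow, habove⟩
  rcases hL.lt_or_gt with hL | hL
  · have hc : ∀ᶠ t in atTop, f t = c → deriv f t < 0 := by
      filter_upwards [hfg, hg.eventually (eventually_lt_nhds hL)] with t hfg hg hft
      rwa [hfg hft]
    have hle := eventually_le_of_frequently_le_of_deriv_neg hf hc (hbelow.mono fun _ => le_of_lt)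
    exact habove (hle.mono fun _ => not_lt.2)
  · have hc : ∀ᶠ t in atTop, -f t = -c → deriv (fun t => -f t) t < 0 := by
      filter_upwards [hfg, hg.eventually (eventually_gt_nhds hL)] with t hfg hg hft
      rw [deriv.fun_neg, hfg (neg_inj.1 hft)]
      linarith
    have hle := eventually_le_of_frequently_le_of_deriv_neg (hf.mono fun _ h => h.neg) hc
      (habove.mono fun _ h => neg_le_neg h.le)
    exact hbelow (hle.mono fun _ h => not_lt.2 (neg_le_neg_iff.1 h))

theorem eq_zero_of_tendsto_of_tendsto_deriv {f : ℝ → ℝ} {a L : ℝ}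
    (hf : ∀ᶠ t in atTop, DifferentiableAt ℝ f t) (hfa : Tendsto f atTop (𝓝 a))
    (hL : Tendsto (deriv f) atTop (𝓝 L)) : L = 0 := by
  by_contra hL0
  set ε := |L| / 2
  have hε : 0 < ε := by positivity
  obtain ⟨T, hT⟩ := eventually_atTop.1 <| hf.and <|
    (Metric.tendsto_nhds.1 hfa (ε / 2) (by positivity)).and (Metric.tendsto_nhds.1 hL ε hε)
  have hdiff : ∀ x ∈ Icc T (T + 1), DifferentiableAt ℝ f x := fun x hx => (hT x hx.1).1
  obtain ⟨ξ, hξ, hslope⟩ := exists_deriv_eq_slope f (lt_add_one T)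
    (fun x hx => (hdiff x hx).continuousAt.continuousWithinAt)
    (fun x hx => (hdiff x (Ioo_subset_Icc_self hx)).differentiableWithinAt)
  rw [add_sub_cancel_left, div_one] at hslope
  have hincr : |f (T + 1) - f T| < ε := by
    have h₁ := (hT (T + 1) (by linarith)).2.1
    have h₂ := (hT T le_rfl).2.1
    rw [Real.dist_eq] at h₁ h₂
    rw [abs_sub_lt_iff] at h₁ h₂ ⊢
    constructor <;> linarith
  have hξL : |deriv f ξ - L| < ε := (hT ξ hξ.1.le).2.2
  have : |L| < |L| := calc
    |L| ≤ |deriv f ξ| + |deriv f ξ - L| := by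
      simpa using abs_sub (deriv f ξ) (deriv f ξ - L)
    _ < ε + ε := add_lt_add (hslope ▸ hincr) hξL
    _ = |L| := add_halves |L|
  exact lt_irrefl _ this

theorem exists_zero_tendsto_of_mul_deriv_add_eq {F ζ lam : ℝ → ℝ} {k : ℝ} (hk : k ≠ 0)
    (hF : Continuous F) (hQ : Dense {q | F q ≠ 0})
    (hζ : ∀ᶠ t in atTop, DifferentiableAt ℝ ζ t)
    (hle : IsBoundedUnder (· ≤ ·) atTop ζ) (hge : IsBoundedUnder (· ≥ ·) atTop ζ)
    (hlam : Tendsto lam atTop (𝓝 0))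
    (hODE : ∀ᶠ t in atTop, k * deriv ζ t + F (ζ t) = lam t) :
    ∃ q, F q = 0 ∧ Tendsto ζ atTop (𝓝 q) := by
  have hderiv : ∀ᶠ t in atTop, deriv ζ t = (lam t - F (ζ t)) / k :=
    hODE.mono fun t h => by rw [← h]; field_simp; ring
  have hconv : ∃ q, Tendsto ζ atTop (𝓝 q) := by
    refine tendsto_of_no_upcrossings hQ (fun c hc b _ hcb ⟨hbelow, habove⟩ => ?_) hle hge
    exact not_frequently_lt_and_gt_of_deriv_eq_of_tendsto hζ
      ((hlam.sub_const (F c)).div_const k) (by simpa [hk] using hc)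
      (hderiv.mono fun t h hζc => by rw [h, hζc]) ⟨hbelow, habove.mono fun _ h => hcb.trans h⟩
  obtain ⟨q, hq⟩ := hconv
  have hζ' : Tendsto (deriv ζ) atTop (𝓝 ((0 - F q) / k)) :=
    ((hlam.sub ((hF.tendsto q).comp hq)).div_const k).congr' (hderiv.mono fun _ h => h.symm)
  exact ⟨q, by simpa [hk] using eq_zero_of_tendsto_of_tendsto_deriv hζ hq hζ', hq⟩

theorem ode_attraction_to_zero_of_F_general
    (U F ζ lam : ℝ → ℝ)
    (hU : ContDiff ℝ 2 U)
    (hF : F = deriv U)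
    (hζ : ContDiffOn ℝ 1 ζ (Ici 0))
    (hbdd : ∃ M : ℝ, ∀ t ≥ (0:ℝ), |ζ t| ≤ M)
    (hlam0 : Tendsto lam atTop (nhds 0))
    (hODE : ∀ t ≥ (0:ℝ), (1 / (4 * π)) * derivWithin ζ (Ici 0) t + F (ζ t) = lam t)
    (hQ : ∀ a b : ℝ, a < b → ¬ (Icc a b ⊆ {q : ℝ | F q = 0})) :
    ∃ q : ℝ, F q = 0 ∧ Tendsto ζ atTop (nhds q) := by
  obtain ⟨M, hM⟩ := hbdd
  have hζM : ∀ᶠ t in atTop, |ζ t| ≤ M := eventually_atTop.2 ⟨0, hM⟩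
  have hζd : ∀ᶠ t in atTop, DifferentiableAt ℝ ζ t := (eventually_gt_atTop 0).mono fun t ht =>
    (hζ.differentiableOn one_ne_zero).differentiableAt (Ici_mem_nhds ht)
  refine exists_zero_tendsto_of_mul_deriv_add_eq (k := 1 / (4 * π)) (by positivity)
    (hF ▸ hU.continuous_deriv one_le_two) (dense_compl_of_forall_not_Icc_subset hQ) hζd
    (isBoundedUnder_of_eventually_le (hζM.mono fun _ h => (abs_le.1 h).2))
    (isBoundedUnder_of_eventually_ge (hζM.mono fun _ h => (abs_le.1 h).1)) hlam0 ?_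
  filter_upwards [eventually_gt_atTop 0] with t ht
  rw [← derivWithin_of_mem_nhds (Ici_mem_nhds ht)]
  exact hODE t ht.le

/-- A bounded C¹ solution of `(1/(4π)) ζ' + F(ζ) = λ` with decaying source `λ`,
where `F = U'` for a confining `C²` potential `U`, converges to a zero of `F`,
provided the zero set of `F` contains no nondegenerate interval. -/
theorem ode_attraction_to_zero_of_F
    (U F ζ lam : ℝ → ℝ)
    (hU : ContDiff ℝ 2 U)
    (hUtop : Tendsto U atTop atTop) (hUbot : Tendsto U atBot atTop)
    (hF : F = deriv U)
    (hζ : ContDiffOn ℝ 1 ζ (Ici 0))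
    (hbdd : ∃ M : ℝ, ∀ t ≥ (0:ℝ), |ζ t| ≤ M)
    (hlam : ContinuousOn lam (Ici 0))
    (hlam0 : Tendsto lam atTop (nhds 0))
    (hODE : ∀ t ≥ (0:ℝ), (1 / (4 * π)) * derivWithin ζ (Ici 0) t + F (ζ t) = lam t)
    (hQ : ∀ a b : ℝ, a < b → ¬ (Icc a b ⊆ {q : ℝ | F q = 0})) :
    ∃ q : ℝ, F q = 0 ∧ Tendsto ζ atTop (nhds q) :=
  ode_attraction_to_zero_of_F_general U F ζ lam hU hF hζ hbdd hlam0 hODE hQ
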